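/- arXiv:2302.00250 — 3 statements merged into one kernel-verified Lean document; each statement's English description precedes it below -/
import Mathlib

section
/- (Lemma 4, Case 1) Let Y be a real-valued random variable with E[|Y|] < ∞, E[Y] < 0, E[e^{λY}] < ∞ for all λ ≥ 0, and P(Y ≥ c) > 0 for some c > 0. Then there exists a unique λ* > 0 such that E[e^{λ*Y}] = 1; moreover E[e^{λY}] < 1 for every λ ∈ (0, λ*) and E[e^{λY}] > 1 for every λ > λ*. -/
open MeasureTheory Real
open scoped ProbabilityTheory

lemma exp_cvx (a b u v : ℝ) (ha : 0 ≤ a) (hb : 0 ≤ b) (hab : a + b = 1) :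
    Real.exp (a*u + b*v) ≤ a * Real.exp u + b * Real.exp v := by
  simpa [smul_eq_mul] using convexOn_exp.2 (Set.mem_univ u) (Set.mem_univ v) ha hb hab

lemma exp_scvx (a b u v : ℝ) (huv : u ≠ v) (ha : 0 < a) (hb : 0 < b) (hab : a + b = 1) :
    Real.exp (a*u + b*v) < a * Real.exp u + b * Real.exp v := by
  simpa [smul_eq_mul] using strictConvexOn_exp.2 (Set.mem_univ u) (Set.mem_univ v) huv ha hb hab

lemma slope_bd (l y : ℝ) (hl0 : 0 < l) (hl1 : l ≤ 1) :
    |(Real.exp (l*y) - 1)/l| ≤ Real.exp y + |y| := by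
  rcases le_or_gt 0 y with hy | hy
  · have h1 : (1:ℝ) ≤ Real.exp (l*y) := Real.one_le_exp (by positivity)
    have h2 : Real.exp (l*y) - 1 ≤ l * (Real.exp y - 1) := by
      have := exp_cvx l (1-l) y 0 hl0.le (by linarith) (by ring)
      simp only [mul_zero, add_zero, Real.exp_zero] at this
      nlinarith
    rw [abs_of_nonneg (by apply div_nonneg (by linarith) hl0.le)]
    rw [div_le_iff₀ hl0]
    have : 0 ≤ |y| := abs_nonneg y
    nlinarith [Real.exp_pos y]
  · have h1 : Real.exp (l*y) ≤ 1 := Real.exp_le_one_iff.mpr (by nlinarith)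
    have h2 : 1 + l*y ≤ Real.exp (l*y) := by linarith [Real.add_one_le_exp (l*y)]
    rw [abs_of_nonpos (by apply div_nonpos_of_nonpos_of_nonneg <;> linarith)]
    rw [← neg_div, div_le_iff₀ hl0]
    rw [abs_of_neg hy]
    nlinarith [Real.exp_pos y]

lemma slope_tendsto (y : ℝ) :
    Filter.Tendsto (fun l => (Real.exp (l*y) - 1)/l) (nhdsWithin 0 (Set.Ioi 0)) (nhds y) := by
  have hd : HasDerivAt (fun l : ℝ => Real.exp (l*y)) y 0 := by
    have : HasDerivAt (fun l : ℝ => l*y) y 0 := by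
      simpa using (hasDerivAt_id (0:ℝ)).mul_const y
    simpa using this.exp
  have hsub : Set.Ioi (0:ℝ) ⊆ {(0:ℝ)}ᶜ := by intro x hx; simpa using (ne_of_gt hx)
  have h2 := (hasDerivAt_iff_tendsto_slope.mp hd).mono_left (nhdsWithin_mono _ hsub)
  refine h2.congr' ?_
  filter_upwards [self_mem_nhdsWithin] with l hl
  rw [slope_def_field]; simp

/-- Lemma 4, Case 1: for a random variable `Y` with negative mean, an
everywhere-finite mgf on `[0, ∞)`, and `P(Y ≥ c) > 0` for some `c > 0`, there is a unique
`λ* > 0` with `E[e^{λ* Y}] = 1`; moreover the mgf is `< 1` on `(0, λ*)` and `> 1` on `(λ*, ∞)`. -/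
theorem exists_unique_lambda_star {Ω : Type*} [MeasureSpace Ω]
    [IsProbabilityMeasure (ℙ : Measure Ω)]
    (Y : Ω → ℝ) (hY : Measurable Y) (hint : Integrable Y)
    (hmean : ∫ ω, Y ω < 0)
    (hmgf : ∀ l : ℝ, 0 ≤ l → Integrable (fun ω => Real.exp (l * Y ω)))
    (c : ℝ) (hc : 0 < c) (hpos : 0 < ℙ {ω | c ≤ Y ω}) :
    ∃ lstar : ℝ, 0 < lstar ∧ (∫ ω, Real.exp (lstar * Y ω)) = 1 ∧
      (∀ l : ℝ, 0 < l → (∫ ω, Real.exp (l * Y ω)) = 1 → l = lstar) ∧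
      (∀ l : ℝ, 0 < l → l < lstar → (∫ ω, Real.exp (l * Y ω)) < 1) ∧
      (∀ l : ℝ, lstar < l → 1 < ∫ ω, Real.exp (l * Y ω)) := by
  set f : ℝ → ℝ := fun l => ∫ ω, Real.exp (l * Y ω) with hf
  have hone : f 0 = 1 := by
    simp [hf, measure_univ]
  -- strict convexity
  have hsconv : ∀ x : ℝ, 0 ≤ x → ∀ y : ℝ, 0 ≤ y → x ≠ y → ∀ a b : ℝ, 0 < a → 0 < b →
      a + b = 1 → f (a*x + b*y) < a * f x + b * f y := by
    intro x hx y hy hxy a b ha hb hab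
    set g : Ω → ℝ := fun ω => a * Real.exp (x * Y ω) + b * Real.exp (y * Y ω)
      - Real.exp ((a*x + b*y) * Y ω) with hg
    have hg0 : ∀ ω, 0 ≤ g ω := by
      intro ω
      have := exp_cvx a b (x * Y ω) (y * Y ω) ha.le hb.le hab
      have heq : (a*x + b*y) * Y ω = a*(x * Y ω) + b*(y * Y ω) := by ring
      simp only [hg, heq]
      linarith
    have hab0 : 0 ≤ a*x + b*y := by positivity
    have hgi : Integrable g :=
      (((hmgf x hx).const_mul a).add ((hmgf y hy).const_mul b)).sub (hmgf _ hab0)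
    have hsupp : {ω | c ≤ Y ω} ⊆ Function.support g := by
      intro ω hω
      have hYω : (0:ℝ) < Y ω := lt_of_lt_of_le hc hω
      have huv : x * Y ω ≠ y * Y ω := fun h => hxy (mul_right_cancel₀ hYω.ne' h)
      have := exp_scvx a b (x * Y ω) (y * Y ω) huv ha hb hab
      have heq : (a*x + b*y) * Y ω = a*(x * Y ω) + b*(y * Y ω) := by ring
      simp only [Function.mem_support, hg, heq]
      intro h; linarith [h]
    have hgpos : 0 < ∫ ω, g ω :=
      (integral_pos_iff_support_of_nonneg hg0 hgi).2
        (lt_of_lt_of_le hpos (measure_mono hsupp))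
    have hABi : Integrable (fun ω => a * Real.exp (x * Y ω) + b * Real.exp (y * Y ω)) :=
      ((hmgf x hx).const_mul a).add ((hmgf y hy).const_mul b)
    have hcalc : ∫ ω, g ω = a * f x + b * f y - f (a*x + b*y) := by
      rw [hg]
      rw [integral_sub hABi (hmgf _ hab0)]
      rw [integral_add ((hmgf x hx).const_mul a) ((hmgf y hy).const_mul b)]
      rw [integral_const_mul, integral_const_mul]
    rw [hcalc] at hgpos
    linarith
  -- small l0 with f l0 < 1
  have htend : Filter.Tendsto (fun l => ∫ ω, (Real.exp (l * Y ω) - 1)/l)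
      (nhdsWithin 0 (Set.Ioi 0)) (nhds (∫ ω, Y ω)) := by
    have hbd : Integrable (fun ω => Real.exp (Y ω) + |Y ω|) := by
      have h1 : Integrable (fun ω => Real.exp (Y ω)) := by simpa using hmgf 1 zero_le_one
      exact h1.add hint.abs
    refine tendsto_integral_filter_of_dominated_convergence _ ?_ ?_ hbd ?_
    · exact Filter.Eventually.of_forall fun l =>
        (((hY.const_mul l).exp.sub measurable_const).div_const l).aestronglyMeasurable
    · have hIoc : Set.Ioc (0:ℝ) 1 ∈ nhdsWithin 0 (Set.Ioi 0) :=
        Ioc_mem_nhdsGT_of_mem ⟨le_refl 0, one_pos⟩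
      filter_upwards [hIoc] with l hl
      exact Filter.Eventually.of_forall fun ω => by
        simpa [Real.norm_eq_abs, abs_div] using slope_bd l (Y ω) hl.1 hl.2
    · exact Filter.Eventually.of_forall fun ω => slope_tendsto (Y ω)
  have hev : ∀ᶠ l in nhdsWithin 0 (Set.Ioi 0),
      (∫ ω, (Real.exp (l * Y ω) - 1)/l) < 0 := htend.eventually (gt_mem_nhds hmean)
  obtain ⟨l0, hneg, hl0⟩ := (hev.and self_mem_nhdsWithin).exists
  have hl0 : (0:ℝ) < l0 := hl0
  have hfl0 : f l0 < 1 := by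
    have hint0 : ∫ ω, (Real.exp (l0 * Y ω) - 1)/l0 = (f l0 - 1)/l0 := by
      rw [integral_div, integral_sub (hmgf l0 hl0.le) (integrable_const 1)]
      simp [hf, measure_univ]
    rw [hint0] at hneg
    have := (div_neg_iff.mp hneg)
    rcases this with ⟨h1, h2⟩ | ⟨h1, h2⟩
    · linarith
    · linarith
  -- large L with f L > 1
  set p : ℝ := (ℙ {ω | c ≤ Y ω}).toReal with hp
  have hppos : 0 < p := ENNReal.toReal_pos hpos.ne' (measure_ne_top _ _)
  set L : ℝ := max (l0+1) ((Real.log (1/p) + 1)/c) with hL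
  have hl0L : l0 < L := lt_of_lt_of_le (lt_add_one l0) (le_max_left _ _)
  have hLpos : 0 < L := lt_trans hl0 hl0L
  have hsmeas : MeasurableSet {ω | c ≤ Y ω} := measurableSet_le measurable_const hY
  have hfLge : Real.exp (L*c) * p ≤ f L := by
    have hind : ∀ ω, Set.indicator {ω | c ≤ Y ω} (fun _ => Real.exp (L*c)) ω
        ≤ Real.exp (L * Y ω) := by
      intro ω
      by_cases hω : ω ∈ {ω | c ≤ Y ω}
      · rw [Set.indicator_of_mem hω]
        exact Real.exp_le_exp.mpr (mul_le_mul_of_nonneg_left hω hLpos.le)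
      · rw [Set.indicator_of_notMem hω]
        exact (Real.exp_pos _).le
    calc Real.exp (L*c) * p
        = ∫ ω, Set.indicator {ω | c ≤ Y ω} (fun _ => Real.exp (L*c)) ω := by
          rw [integral_indicator_const _ hsmeas]; simp [hp]; rw [mul_comm]; rfl
      _ ≤ f L := integral_mono ((integrable_const _).indicator hsmeas) (hmgf L hLpos.le) hind
  have hfLgt : 1 < f L := by
    have hLc : Real.log (1/p) + 1 ≤ L * c := by
      have : (Real.log (1/p) + 1)/c ≤ L := le_max_right _ _
      calc Real.log (1/p) + 1 = ((Real.log (1/p) + 1)/c) * c := by field_simp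
        _ ≤ L * c := by exact mul_le_mul_of_nonneg_right this hc.le
    have h1 : 1/p < Real.exp (L*c) := by
      calc 1/p = Real.exp (Real.log (1/p)) := (Real.exp_log (by positivity)).symm
        _ < Real.exp (L*c) := Real.exp_lt_exp.mpr (by linarith)
    calc (1:ℝ) = (1/p) * p := by field_simp
      _ < Real.exp (L*c) * p := by exact mul_lt_mul_of_pos_right h1 hppos
      _ ≤ f L := hfLge
  -- continuity on (0,∞)
  have hcont : ∀ x : ℝ, 0 < x → ContinuousAt f x := by
    intro x hx
    have hbd : Integrable (fun ω => Real.exp ((x/2) * Y ω) + Real.exp ((x+1) * Y ω)) :=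
      (hmgf (x/2) (by linarith)).add (hmgf (x+1) (by linarith))
    refine tendsto_integral_filter_of_dominated_convergence _ ?_ ?_ hbd ?_
    · exact Filter.Eventually.of_forall fun l => ((hY.const_mul l).exp).aestronglyMeasurable
    · have hIoo : Set.Ioo (x/2) (x+1) ∈ nhds x := Ioo_mem_nhds (by linarith) (lt_add_one x)
      filter_upwards [hIoo] with l hl
      refine Filter.Eventually.of_forall fun ω => ?_
      rw [Real.norm_eq_abs, abs_of_pos (Real.exp_pos _)]
      rcases le_or_gt 0 (Y ω) with hy | hy
      · have : l * Y ω ≤ (x+1) * Y ω := mul_le_mul_of_nonneg_right hl.2.le hy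
        have := Real.exp_le_exp.mpr this
        linarith [Real.exp_pos ((x/2) * Y ω)]
      · have : l * Y ω ≤ (x/2) * Y ω := mul_le_mul_of_nonpos_right hl.1.le hy.le
        have := Real.exp_le_exp.mpr this
        linarith [Real.exp_pos ((x+1) * Y ω)]
    · refine Filter.Eventually.of_forall fun ω => ?_
      exact (Real.continuous_exp.comp (continuous_id.mul continuous_const)).continuousAt
  -- IVT
  have hcontOn : ContinuousOn f (Set.Icc l0 L) := fun x hx =>
    (hcont x (lt_of_lt_of_le hl0 hx.1)).continuousWithinAt
  have hivt := intermediate_value_Icc hl0L.le hcontOn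
  have h1mem : (1:ℝ) ∈ Set.Icc (f l0) (f L) := ⟨hfl0.le, hfLgt.le⟩
  obtain ⟨lstar, hmem, hfeq⟩ := hivt h1mem
  have hlstar : 0 < lstar := lt_of_lt_of_le hl0 hmem.1
  -- conclusions
  have hlt : ∀ l : ℝ, 0 < l → l < lstar → f l < 1 := by
    intro l hl hll
    have hb : 0 < l / lstar := div_pos hl hlstar
    have hb1 : l / lstar < 1 := (div_lt_one hlstar).mpr hll
    have := hsconv 0 le_rfl lstar hlstar.le hlstar.ne (1 - l/lstar) (l/lstar)
      (by linarith) hb (by ring)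
    have heq : (1 - l/lstar)*0 + (l/lstar)*lstar = l := by field_simp; ring
    rw [heq, hone, hfeq] at this
    linarith
  have hgt : ∀ l : ℝ, lstar < l → 1 < f l := by
    intro l hll
    have hlpos : 0 < l := lt_trans hlstar hll
    have hb : 0 < lstar / l := div_pos hlstar hlpos
    have hb1 : lstar / l < 1 := (div_lt_one hlpos).mpr hll
    have := hsconv 0 le_rfl l hlpos.le hlpos.ne (1 - lstar/l) (lstar/l)
      (by linarith) hb (by ring)
    have heq : (1 - lstar/l)*0 + (lstar/l)*l = lstar := by field_simp; ring
    rw [heq, hone, hfeq] at this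
    nlinarith
  refine ⟨lstar, hlstar, hfeq, ?_, hlt, hgt⟩
  intro l hl heq
  rcases lt_trichotomy l lstar with h | h | h
  · exact absurd heq (by have := hlt l hl h; simp [hf] at this ⊢; linarith)
  · exact h
  · exact absurd heq (by have := hgt l h; simp [hf] at this ⊢; linarith)
end

section
/- (Theorem on the average run length) Let (ξ_n)_{n≥1} be i.i.d. real-valued random variables satisfying E[e^{ξ_1}] ≤ 1. For τ > 0 define the CUSUM-type stopping time T = inf{n ≥ 1 : max_{1≤k≤n} Σ_{i=k}^n ξ_i ≥ τ}, with inf ∅ = +∞. Then E[T] ≥ e^{τ}, where the expectation is taken in [0, ∞]. -/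
open MeasureTheory Real ProbabilityTheory
open scoped ProbabilityTheory ENNReal

/-- The CUSUM-type stopping time `T = inf {n ≥ 1 : max_{1≤k≤n} ∑_{i=k}^n ξ_i ≥ τ}`
(with `inf ∅ = +∞`), as an `ℝ≥0∞`-valued random time. Here `ξ i` (for `i : ℕ`)
denotes the `(i+1)`-st increment, so that the inner sum `∑_{i=k}^n ξ_i` of the paper
becomes `∑_{i ∈ Ico (k-1) n} ξ i` with `k - 1 < n`. -/
noncomputable def cusumTime {Ω : Type*} (ξ : ℕ → Ω → ℝ) (τ : ℝ) (ω : Ω) : ℝ≥0∞ :=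
  sInf {t : ℝ≥0∞ | ∃ n : ℕ, t = n ∧ 1 ≤ n ∧
    ∃ k : ℕ, k < n ∧ τ ≤ ∑ i ∈ Finset.Ico k n, ξ i ω}

/-!
The Shiryaev–Roberts statistic `R n = ∑_{k<n} exp (ξ_k + ⋯ + ξ_{n-1})` obeys
`R (n+1) = (R n + 1) e^{ξ_n}`, and it is at least `e^τ` whenever the CUSUM alarm sounds at time
`n`. Since `e^{ξ_n}` is independent of the past and has mean at most `1`, the quantity
`E[R n; T > n] + e^τ ℙ(T ≤ n)` grows by at most `ℙ(T > n)` per step, so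
`e^τ ℙ(T ≤ n) ≤ ∑_{m<n} ℙ(T > m) ≤ E[T]`. Letting `n → ∞`, either `E[T] = ∞` or
`ℙ(T ≤ n) → 1`.
-/

open Filter Topology

theorem ProbabilityTheory.iIndepFun.indepFun_of_measurable_iSup_comap
    {Ω ι E β : Type*} [MeasurableSpace Ω] [mE : MeasurableSpace E] [MeasurableSpace β]
    {μ : Measure Ω} {ξ : ι → Ω → E} (hmeas : ∀ i, Measurable (ξ i)) (hindep : iIndepFun ξ μ)
    {S : Set ι} {j : ι} (hj : j ∉ S) {f : Ω → β}
    (hf : Measurable[⨆ i ∈ S, mE.comap (ξ i)] f) :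
    IndepFun f (ξ j) μ := by
  rw [IndepFun_iff_Indep]
  have hST : Disjoint S {j} := Set.disjoint_singleton_right.2 hj
  exact indep_of_indep_of_le
    (indep_iSup_of_disjoint (fun i => (hmeas i).comap_le) hindep.iIndep hST)
    hf.comap_le (le_iSup₂ (f := fun i (_ : i ∈ ({j} : Set ι)) => mE.comap (ξ i)) j rfl)

theorem ENNReal.le_tsum_of_forall_mul_one_sub_le {a : ℕ → ℝ≥0∞} {c : ℝ≥0∞} (hc : c ≠ ∞)
    (h : ∀ n, c * (1 - a n) ≤ ∑' m, a m) : c ≤ ∑' m, a m := by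
  by_cases hsum : ∑' m, a m = ∞
  · exact hsum ▸ le_top
  have hlim : Tendsto (fun n => c * (1 - a n)) atTop (𝓝 (c * (1 - 0))) :=
    ENNReal.Tendsto.const_mul
      (ENNReal.Tendsto.sub tendsto_const_nhds (ENNReal.tendsto_atTop_zero_of_tsum_ne_top hsum)
        (Or.inl ENNReal.one_ne_top)) (Or.inr hc)
  simpa using le_of_tendsto' hlim h

namespace Cusum

variable {Ω : Type*} (ξ : ℕ → Ω → ℝ) (τ : ℝ)

-- `alarm ξ τ n` is the event `max_{1≤k≤n} ∑_{i=k}^n ξ_i ≥ τ`, and `noAlarmUntil ξ τ n` is `n < T`.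
def alarm (n : ℕ) : Set Ω := ⋃ k < n, {ω | τ ≤ ∑ i ∈ Finset.Ico k n, ξ i ω}

def noAlarmUntil (n : ℕ) : Set Ω := ⋂ m ≤ n, (alarm ξ τ m)ᶜ

noncomputable def shiryaevRoberts (n : ℕ) (ω : Ω) : ℝ≥0∞ :=
  ∑ k ∈ Finset.range n, ENNReal.ofReal (exp (∑ i ∈ Finset.Ico k n, ξ i ω))

variable {ξ τ}

@[simp]
theorem alarm_zero : alarm ξ τ 0 = ∅ := by
  simp [alarm]

@[simp]
theorem noAlarmUntil_zero : noAlarmUntil ξ τ 0 = Set.univ := by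
  simp [noAlarmUntil]

theorem noAlarmUntil_succ (n : ℕ) :
    noAlarmUntil ξ τ (n + 1) = noAlarmUntil ξ τ n ∩ (alarm ξ τ (n + 1))ᶜ :=
  Set.biInter_le_succ _ n

theorem notMem_noAlarmUntil {m n : ℕ} {ω : Ω} (hω : ω ∈ alarm ξ τ n) (hnm : n ≤ m) :
    ω ∉ noAlarmUntil ξ τ m := fun h => Set.mem_iInter₂.1 h n hnm hω

@[simp]
theorem shiryaevRoberts_zero : shiryaevRoberts ξ 0 = 0 := by
  ext ω
  simp [shiryaevRoberts]

theorem shiryaevRoberts_succ (n : ℕ) (ω : Ω) :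
    shiryaevRoberts ξ (n + 1) ω
      = (shiryaevRoberts ξ n ω + 1) * ENNReal.ofReal (exp (ξ n ω)) := by
  have hshift : ∀ k ∈ Finset.range n,
      ENNReal.ofReal (exp (∑ i ∈ Finset.Ico k (n + 1), ξ i ω))
        = ENNReal.ofReal (exp (∑ i ∈ Finset.Ico k n, ξ i ω)) * ENNReal.ofReal (exp (ξ n ω)) :=
    fun k hk => by
      rw [Finset.sum_Ico_succ_top (Finset.mem_range.1 hk).le, exp_add,
        ENNReal.ofReal_mul (exp_nonneg _)]
  rw [shiryaevRoberts, Finset.sum_range_succ, Finset.sum_congr rfl hshift, ← Finset.sum_mul,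
    Nat.Ico_succ_singleton, Finset.sum_singleton, add_mul, one_mul, shiryaevRoberts]

theorem ofReal_exp_le_shiryaevRoberts {n : ℕ} {ω : Ω} (hω : ω ∈ alarm ξ τ n) :
    ENNReal.ofReal (exp τ) ≤ shiryaevRoberts ξ n ω := by
  obtain ⟨k, hk, hτk⟩ : ∃ k < n, τ ≤ ∑ i ∈ Finset.Ico k n, ξ i ω := by simpa [alarm] using hω
  exact (ENNReal.ofReal_le_ofReal (exp_le_exp.2 hτk)).trans
    (Finset.single_le_sum (f := fun k => ENNReal.ofReal (exp (∑ i ∈ Finset.Ico k n, ξ i ω)))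
      (fun _ _ => bot_le) (Finset.mem_range.2 hk))

section Measurability

variable {m : MeasurableSpace Ω} {n : ℕ} (hξ : ∀ i < n, Measurable (ξ i))
include hξ

theorem measurable_sum_Ico {j : ℕ} (hj : j ≤ n) (k : ℕ) :
    Measurable fun ω => ∑ i ∈ Finset.Ico k j, ξ i ω :=
  Finset.measurable_sum _ fun i hi => hξ i ((Finset.mem_Ico.1 hi).2.trans_le hj)

theorem measurableSet_alarm {j : ℕ} (hj : j ≤ n) : MeasurableSet (alarm ξ τ j) :=
  .biUnion (Set.to_countable _) fun k _ =>
    measurableSet_le measurable_const (measurable_sum_Ico hξ hj k)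

theorem measurableSet_noAlarmUntil : MeasurableSet (noAlarmUntil ξ τ n) :=
  .biInter (Set.to_countable _) fun _ hj => (measurableSet_alarm hξ hj).compl

theorem measurable_shiryaevRoberts : Measurable (shiryaevRoberts ξ n) :=
  Finset.measurable_sum _ fun k _ =>
    ENNReal.measurable_ofReal.comp (measurable_exp.comp (measurable_sum_Ico hξ le_rfl k))

end Measurability

theorem tsum_indicator_noAlarmUntil_le_cusumTime (ω : Ω) :
    ∑' m, (noAlarmUntil ξ τ m).indicator 1 ω ≤ cusumTime ξ τ ω := by
  refine le_sInf ?_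
  rintro _ ⟨N, rfl, -, k, hk, hτk⟩
  have hN : ω ∈ alarm ξ τ N := Set.mem_iUnion₂.2 ⟨k, hk, hτk⟩
  rw [tsum_eq_sum (s := Finset.range N) fun m hm =>
    Set.indicator_of_notMem (notMem_noAlarmUntil hN (by simpa using hm)) _]
  calc ∑ m ∈ Finset.range N, (noAlarmUntil ξ τ m).indicator 1 ω
      ≤ ∑ m ∈ Finset.range N, (1 : ℝ≥0∞) :=
        Finset.sum_le_sum fun m _ => Set.indicator_le_self _ _ _
    _ = N := by simp

variable [MeasurableSpace Ω] {μ : Measure Ω} (hmeas : ∀ i, Measurable (ξ i))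
include hmeas

theorem tsum_measure_noAlarmUntil_le_lintegral_cusumTime :
    ∑' m, μ (noAlarmUntil ξ τ m) ≤ ∫⁻ ω, cusumTime ξ τ ω ∂μ := by
  have hB : ∀ m, MeasurableSet (noAlarmUntil ξ τ m) :=
    fun m => measurableSet_noAlarmUntil fun i _ => hmeas i
  calc ∑' m, μ (noAlarmUntil ξ τ m)
      = ∫⁻ ω, ∑' m, (noAlarmUntil ξ τ m).indicator 1 ω ∂μ := by
        rw [lintegral_tsum fun m => (measurable_one.indicator (hB m)).aemeasurable]
        simp_rw [lintegral_indicator_one (hB _)]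
    _ ≤ ∫⁻ ω, cusumTime ξ τ ω ∂μ := lintegral_mono tsum_indicator_noAlarmUntil_le_cusumTime

theorem setLIntegral_noAlarmUntil_succ_add_le (n : ℕ) :
    ∫⁻ ω in noAlarmUntil ξ τ (n + 1), shiryaevRoberts ξ (n + 1) ω ∂μ
        + ENNReal.ofReal (exp τ) * μ (noAlarmUntil ξ τ n ∩ alarm ξ τ (n + 1))
      ≤ ∫⁻ ω in noAlarmUntil ξ τ n, shiryaevRoberts ξ (n + 1) ω ∂μ := by
  have hA : MeasurableSet (alarm ξ τ (n + 1)) := measurableSet_alarm (fun i _ => hmeas i) le_rfl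
  rw [← lintegral_inter_add_sdiff _ (noAlarmUntil ξ τ n) hA.compl, ← noAlarmUntil_succ,
    Set.sdiff_compl]
  gcongr
  rw [← setLIntegral_const]
  exact setLIntegral_mono (measurable_shiryaevRoberts fun i _ => hmeas i)
    fun ω hω => ofReal_exp_le_shiryaevRoberts hω.2

theorem setLIntegral_shiryaevRoberts_succ_le (hindep : iIndepFun ξ μ) (n : ℕ)
    (hmgf : ∫⁻ ω, ENNReal.ofReal (exp (ξ n ω)) ∂μ ≤ 1) :
    ∫⁻ ω in noAlarmUntil ξ τ n, shiryaevRoberts ξ (n + 1) ω ∂μ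
      ≤ ∫⁻ ω in noAlarmUntil ξ τ n, shiryaevRoberts ξ n ω ∂μ + μ (noAlarmUntil ξ τ n) := by
  have hξ_past : ∀ i < n,
      Measurable[⨆ j ∈ Set.Iio n, MeasurableSpace.comap (ξ j) inferInstance] (ξ i) :=
    fun i hi => Measurable.of_comap_le (le_iSup₂ (f := fun j (_ : j ∈ Set.Iio n) =>
      MeasurableSpace.comap (ξ j) inferInstance) i hi)
  set B := noAlarmUntil ξ τ n
  set g := B.indicator fun ω => shiryaevRoberts ξ n ω + 1 with hg
  have hg_past : Measurable[⨆ j ∈ Set.Iio n, MeasurableSpace.comap (ξ j) inferInstance] g :=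
    ((measurable_shiryaevRoberts hξ_past).add_const 1).indicator
      (measurableSet_noAlarmUntil hξ_past)
  have hB : MeasurableSet B := measurableSet_noAlarmUntil fun i _ => hmeas i
  have hexp : Measurable fun x : ℝ => ENNReal.ofReal (exp x) :=
    ENNReal.measurable_ofReal.comp measurable_exp
  have hindep_g : IndepFun g (fun ω => ENNReal.ofReal (exp (ξ n ω))) μ :=
    (hindep.indepFun_of_measurable_iSup_comap hmeas Set.self_notMem_Iio hg_past).comp
      measurable_id hexp
  calc ∫⁻ ω in B, shiryaevRoberts ξ (n + 1) ω ∂μ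
      = ∫⁻ ω, (g * fun ω => ENNReal.ofReal (exp (ξ n ω))) ω ∂μ := by
        rw [← lintegral_indicator hB]
        congr 1
        ext ω
        by_cases hω : ω ∈ B <;> simp [hg, hω, shiryaevRoberts_succ]
    _ = (∫⁻ ω, g ω ∂μ) * ∫⁻ ω, ENNReal.ofReal (exp (ξ n ω)) ∂μ :=
        lintegral_mul_eq_lintegral_mul_lintegral_of_indepFun
          (hg_past.mono (iSup₂_le fun i _ => (hmeas i).comap_le) le_rfl)
          (hexp.comp (hmeas n)) hindep_g
    _ ≤ ∫⁻ ω, g ω ∂μ := mul_le_of_le_one_right' hmgf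
    _ = ∫⁻ ω in B, shiryaevRoberts ξ n ω ∂μ + μ B := by
        rw [hg, lintegral_indicator hB, lintegral_add_right _ measurable_const, setLIntegral_const,
          one_mul]

theorem setLIntegral_shiryaevRoberts_add_le_sum (hindep : iIndepFun ξ μ)
    (hmgf : ∀ n, ∫⁻ ω, ENNReal.ofReal (exp (ξ n ω)) ∂μ ≤ 1) (n : ℕ) :
    ∫⁻ ω in noAlarmUntil ξ τ n, shiryaevRoberts ξ n ω ∂μ
        + ENNReal.ofReal (exp τ) * μ (noAlarmUntil ξ τ n)ᶜ
      ≤ ∑ m ∈ Finset.range n, μ (noAlarmUntil ξ τ m) := by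
  induction n with
  | zero => simp
  | succ n ih =>
    set B := noAlarmUntil ξ τ
    set A := alarm ξ τ (n + 1)
    set e := ENNReal.ofReal (exp τ)
    have hcompl : μ (B (n + 1))ᶜ ≤ μ (B n ∩ A) + μ (B n)ᶜ := by
      refine (measure_mono fun ω hω => ?_).trans (measure_union_le _ _)
      by_cases hω' : ω ∈ B n <;> simp_all [B, A, noAlarmUntil_succ]
    calc ∫⁻ ω in B (n + 1), shiryaevRoberts ξ (n + 1) ω ∂μ + e * μ (B (n + 1))ᶜ
        ≤ ∫⁻ ω in B (n + 1), shiryaevRoberts ξ (n + 1) ω ∂μ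
            + e * μ (B n ∩ A) + e * μ (B n)ᶜ := by
          grw [hcompl, mul_add, add_assoc]
      _ ≤ ∫⁻ ω in B n, shiryaevRoberts ξ (n + 1) ω ∂μ + e * μ (B n)ᶜ := by
          grw [setLIntegral_noAlarmUntil_succ_add_le hmeas]
      _ ≤ ∫⁻ ω in B n, shiryaevRoberts ξ n ω ∂μ + μ (B n) + e * μ (B n)ᶜ := by
          grw [setLIntegral_shiryaevRoberts_succ_le hmeas hindep n (hmgf n)]
      _ = ∫⁻ ω in B n, shiryaevRoberts ξ n ω ∂μ + e * μ (B n)ᶜ + μ (B n) := add_right_comm _ _ _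
      _ ≤ ∑ m ∈ Finset.range (n + 1), μ (B m) := by
          grw [ih, Finset.sum_range_succ]

end Cusum

theorem cusum_arl_lower_bound_general {Ω : Type*} [MeasureSpace Ω]
    [IsProbabilityMeasure (ℙ : Measure Ω)]
    (ξ : ℕ → Ω → ℝ) (hmeas : ∀ n, Measurable (ξ n))
    (hindep : iIndepFun ξ ℙ)
    (hident : ∀ n, IdentDistrib (ξ n) (ξ 0) ℙ ℙ)
    (hmgf : ∫⁻ ω, ENNReal.ofReal (Real.exp (ξ 0 ω)) ≤ 1)
    (τ : ℝ) :
    ENNReal.ofReal (Real.exp τ) ≤ ∫⁻ ω, cusumTime ξ τ ω := by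
  open Cusum in
  have hmgf_n : ∀ n, ∫⁻ ω, ENNReal.ofReal (exp (ξ n ω)) ≤ 1 := fun n =>
    ((hident n).comp (ENNReal.measurable_ofReal.comp measurable_exp)).lintegral_eq.trans_le hmgf
  refine le_trans ?_ (tsum_measure_noAlarmUntil_le_lintegral_cusumTime (τ := τ) hmeas)
  refine ENNReal.le_tsum_of_forall_mul_one_sub_le ENNReal.ofReal_ne_top fun n => ?_
  rw [← prob_compl_eq_one_sub (measurableSet_noAlarmUntil fun i _ => hmeas i)]
  exact le_add_self.trans
    ((setLIntegral_shiryaevRoberts_add_le_sum hmeas hindep hmgf_n n).trans (ENNReal.sum_le_tsum _))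

/-- Theorem on the average run length: if `(ξ_n)` are i.i.d. with
`E[e^{ξ_1}] ≤ 1`, then the CUSUM stopping time with threshold `τ > 0` satisfies
`E[T] ≥ e^τ` (expectation in `[0, ∞]`). -/
theorem cusum_arl_lower_bound {Ω : Type*} [MeasureSpace Ω]
    [IsProbabilityMeasure (ℙ : Measure Ω)]
    (ξ : ℕ → Ω → ℝ) (hmeas : ∀ n, Measurable (ξ n))
    (hindep : iIndepFun ξ ℙ)
    (hident : ∀ n, IdentDistrib (ξ n) (ξ 0) ℙ ℙ)
    (hmgf : ∫⁻ ω, ENNReal.ofReal (Real.exp (ξ 0 ω)) ≤ 1)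
    (τ : ℝ) (hτ : 0 < τ) :
    ENNReal.ofReal (Real.exp τ) ≤ ∫⁻ ω, cusumTime ξ τ ω :=
  cusum_arl_lower_bound_general ξ hmeas hindep hident hmgf τ
end

section
/- Let θ_0, θ_1 ∈ ℝ^d, let Σ be a d×d symmetric positive definite matrix, set Δ = θ_0 − θ_1, and let p_0, p_1 denote the densities of N(θ_0, Σ) and N(θ_1, Σ). For λ ∈ ℝ define z_λ(x) = λ(S_H(x, p_0) − S_H(x, p_1)). Then E_{X∼N(θ_0,Σ)}[exp(z_λ(X))] = exp((1/2)λ²ΔᵀΣ⁻³Δ − (1/2)λΔᵀΣ⁻²Δ), where Σ⁻ᵏ denotes the k-th power of Σ⁻¹. In particular, if Δ ≠ 0 then λ* = (ΔᵀΣ⁻²Δ)/(ΔᵀΣ⁻³Δ) is the unique positive value of λ for which E_{X∼N(θ_0,Σ)}[exp(z_λ(X))] = 1. -/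
open MeasureTheory Real Matrix
open scoped RealInnerProductSpace

/-- The Laplacian of a function on `ℝ^d`, as the sum of the second derivatives
along the coordinate directions. -/
noncomputable def lapl {d : ℕ} (f : EuclideanSpace ℝ (Fin d) → ℝ)
    (x : EuclideanSpace ℝ (Fin d)) : ℝ :=
  ∑ i : Fin d, iteratedDeriv 2 (fun t : ℝ => f (x + t • EuclideanSpace.single i (1 : ℝ))) 0

/-- The Hyvärinen score `S_H(x, q) = (1/2) ‖∇ log q(x)‖₂² + Δ log q(x)`. -/
noncomputable def hyvScore {d : ℕ} (x : EuclideanSpace ℝ (Fin d))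
    (q : EuclideanSpace ℝ (Fin d) → ℝ) : ℝ :=
  (1 / 2) * ‖gradient (fun y => Real.log (q y)) x‖ ^ 2
    + lapl (fun y => Real.log (q y)) x

/-- The multivariate normal density
`p(x) = (2π)^{−d/2} det(Σ)^{−1/2} exp(−(1/2)(x−θ)ᵀ Σ⁻¹ (x−θ))` on `ℝ^d`. -/
noncomputable def gaussDensity {d : ℕ} (θ : EuclideanSpace ℝ (Fin d))
    (S : Matrix (Fin d) (Fin d) ℝ) (x : EuclideanSpace ℝ (Fin d)) : ℝ :=
  (2 * Real.pi) ^ (-(d : ℝ) / 2) * S.det ^ (-(1 : ℝ) / 2) *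
    Real.exp (-(1 / 2) * ((fun i => x i - θ i) ⬝ᵥ (S⁻¹ *ᵥ fun i => x i - θ i)))

/-! ### Auxiliary material -/

section Aux

variable {d : ℕ}

noncomputable def gconst (d : ℕ) (S : Matrix (Fin d) (Fin d) ℝ) : ℝ :=
  (2 * Real.pi) ^ (-(d : ℝ) / 2) * S.det ^ (-(1 : ℝ) / 2)

lemma gconst_pos {S : Matrix (Fin d) (Fin d) ℝ} (hS : S.PosDef) : 0 < gconst d S := by
  have h1 : (0:ℝ) < 2 * Real.pi := by positivity
  have h2 := hS.det_pos
  exact mul_pos (Real.rpow_pos_of_pos h1 _) (Real.rpow_pos_of_pos h2 _)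

lemma gaussDensity_eq (θ : EuclideanSpace ℝ (Fin d)) (S : Matrix (Fin d) (Fin d) ℝ)
    (x : EuclideanSpace ℝ (Fin d)) :
    gaussDensity θ S x
      = gconst d S * Real.exp (-(1/2) * ((fun i => x i - θ i) ⬝ᵥ (S⁻¹ *ᵥ fun i => x i - θ i))) :=
  rfl

lemma log_gauss_fun {S : Matrix (Fin d) (Fin d) ℝ} (hS : S.PosDef) (θ : EuclideanSpace ℝ (Fin d)) :
    (fun y => Real.log (gaussDensity θ S y))
      = fun y => Real.log (gconst d S)
          + (-(1/2)) * ((fun i => y i - θ i) ⬝ᵥ (S⁻¹ *ᵥ fun i => y i - θ i)) := by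
  funext y
  rw [gaussDensity_eq, Real.log_mul (ne_of_gt (gconst_pos hS)) (Real.exp_ne_zero _),
    Real.log_exp]

lemma inv_symm {S : Matrix (Fin d) (Fin d) ℝ} (hS : S.PosDef) : S⁻¹ᵀ = S⁻¹ := by
  have h := hS.inv.isHermitian
  rwa [Matrix.IsHermitian, Matrix.conjTranspose_eq_transpose_of_trivial] at h

lemma dot_symm_aux {A : Matrix (Fin d) (Fin d) ℝ} (hA : Aᵀ = A) (u v : Fin d → ℝ) :
    u ⬝ᵥ (A *ᵥ v) = v ⬝ᵥ (A *ᵥ u) := by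
  rw [Matrix.dotProduct_mulVec]
  nth_rewrite 1 [← hA]
  rw [Matrix.vecMul_transpose, dotProduct_comm]

noncomputable def matCLM (A : Matrix (Fin d) (Fin d) ℝ) :
    EuclideanSpace ℝ (Fin d) →L[ℝ] EuclideanSpace ℝ (Fin d) :=
  LinearMap.toContinuousLinearMap (Matrix.toEuclideanLin A)

lemma inner_eq_dot (a b : EuclideanSpace ℝ (Fin d)) :
    ⟪a, b⟫ = (fun i => a i) ⬝ᵥ (fun i => b i) := by
  simp [PiLp.inner_apply, dotProduct, mul_comm]

lemma inner_matCLM_symm {A : Matrix (Fin d) (Fin d) ℝ} (hA : Aᵀ = A)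
    (u v : EuclideanSpace ℝ (Fin d)) : ⟪u, matCLM A v⟫ = ⟪v, matCLM A u⟫ := by
  rw [inner_eq_dot, inner_eq_dot]
  have h1 : (fun i => matCLM A v i) = (A *ᵥ fun j => v j) := rfl
  have h2 : (fun i => matCLM A u i) = (A *ᵥ fun j => u j) := rfl
  rw [h1, h2]
  exact dot_symm_aux hA _ _

lemma hasGradientAt_quad {A : Matrix (Fin d) (Fin d) ℝ} (hA : Aᵀ = A)
    (C : ℝ) (θ x : EuclideanSpace ℝ (Fin d)) :
    HasGradientAt (fun y : EuclideanSpace ℝ (Fin d) =>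
        C + (-(1/2)) * ((fun i => y i - θ i) ⬝ᵥ (A *ᵥ fun i => y i - θ i)))
      (-(matCLM A (x - θ))) x := by
  have key : ∀ y : EuclideanSpace ℝ (Fin d),
      (fun i => y i - θ i) ⬝ᵥ (A *ᵥ fun i => y i - θ i) = ⟪y - θ, matCLM A (y - θ)⟫ := by
    intro y
    rw [inner_eq_dot]
    rfl
  simp_rw [key]
  rw [hasGradientAt_iff_hasFDerivAt]
  have h1 : HasFDerivAt (fun y : EuclideanSpace ℝ (Fin d) => y - θ)
      (ContinuousLinearMap.id ℝ _) x := (hasFDerivAt_id x).sub_const θ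
  have h2 : HasFDerivAt (fun y : EuclideanSpace ℝ (Fin d) => matCLM A (y - θ))
      (matCLM A) x := by
    exact ((matCLM A).hasFDerivAt.comp x h1)
  have h3 := (h1.inner ℝ h2)
  have h4 := (h3.const_mul (-(1/2) : ℝ)).const_add C
  refine HasFDerivAt.congr_fderiv h4 ?_
  ext v
  simp only [ContinuousLinearMap.smul_apply, ContinuousLinearMap.comp_apply,
    fderivInnerCLM_apply, ContinuousLinearMap.prod_apply, ContinuousLinearMap.id_apply,
    InnerProductSpace.toDual_apply_apply, smul_eq_mul]
  have hsym : ⟪x - θ, matCLM A v⟫ = ⟪v, matCLM A (x - θ)⟫ := inner_matCLM_symm hA _ _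
  rw [hsym]
  rw [inner_neg_left, real_inner_comm]
  ring

lemma norm_sq_neg_matCLM {A : Matrix (Fin d) (Fin d) ℝ} (hA : Aᵀ = A)
    (w : EuclideanSpace ℝ (Fin d)) :
    ‖-(matCLM A w)‖ ^ 2 = (fun i => w i) ⬝ᵥ ((A * A) *ᵥ fun i => w i) := by
  rw [norm_neg, ← real_inner_self_eq_norm_sq, inner_eq_dot]
  have h : (fun i => matCLM A w i) = (A *ᵥ fun j => w j) := rfl
  rw [h, ← Matrix.mulVec_mulVec, dot_symm_aux hA]

lemma iteratedDeriv_two_quadratic (a b c : ℝ) :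
    iteratedDeriv 2 (fun t : ℝ => a + b * t + c * t ^ 2) 0 = 2 * c := by
  have h1 : (deriv fun t : ℝ => a + b * t + c * t ^ 2) = fun t => b + c * (2 * t) := by
    funext t
    have : HasDerivAt (fun t : ℝ => a + b * t + c * t ^ 2) (b + c * (2 * t)) t := by
      have hb : HasDerivAt (fun t : ℝ => a + b * t) b t := by
        simpa using ((hasDerivAt_id t).const_mul b).const_add a
      have hc : HasDerivAt (fun t : ℝ => c * t ^ 2) (c * (2 * t)) t := by
        simpa using ((hasDerivAt_pow 2 t)).const_mul c
      exact hb.add hc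
    exact this.deriv
  rw [iteratedDeriv_succ, iteratedDeriv_one, h1]
  have : HasDerivAt (fun t : ℝ => b + c * (2 * t)) (c * 2) 0 := by
    simpa using (((hasDerivAt_id (0:ℝ)).const_mul 2).const_mul c).const_add b
  rw [this.deriv]; ring

lemma lapl_quad {A : Matrix (Fin d) (Fin d) ℝ} (hA : Aᵀ = A) (C : ℝ)
    (θ x : EuclideanSpace ℝ (Fin d)) :
    lapl (fun y => C + (-(1/2)) * ((fun i => y i - θ i) ⬝ᵥ (A *ᵥ fun i => y i - θ i))) x
      = -∑ i, A i i := by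
  unfold lapl
  rw [← Finset.sum_neg_distrib]
  refine Finset.sum_congr rfl fun i _ => ?_
  set u : Fin d → ℝ := fun j => x j - θ j with hu
  set e : Fin d → ℝ := Pi.single i 1 with he
  have hcoord : ∀ t : ℝ,
      (fun j => (x + t • EuclideanSpace.single i (1:ℝ)) j - θ j) = u + t • e := by
    intro t; funext j
    simp [u, e, EuclideanSpace.single_apply, Pi.single_apply, mul_comm]
    ring
  have hexp : ∀ t : ℝ, (u + t • e) ⬝ᵥ (A *ᵥ (u + t • e))
      = (u ⬝ᵥ (A *ᵥ u)) + (2 * (e ⬝ᵥ (A *ᵥ u))) * t + (e ⬝ᵥ (A *ᵥ e)) * t ^ 2 := by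
    intro t
    simp only [Matrix.mulVec_add, Matrix.mulVec_smul, dotProduct_add,
      add_dotProduct, dotProduct_smul, smul_dotProduct, smul_eq_mul]
    rw [dot_symm_aux hA u e]
    ring
  have hline : (fun t : ℝ => C + (-(1/2)) *
      ((fun j => (x + t • EuclideanSpace.single i (1:ℝ)) j - θ j) ⬝ᵥ
        (A *ᵥ fun j => (x + t • EuclideanSpace.single i (1:ℝ)) j - θ j)))
      = fun t : ℝ => (C + (-(1/2)) * (u ⬝ᵥ (A *ᵥ u)))
          + (-(e ⬝ᵥ (A *ᵥ u))) * t + (-(1/2) * (e ⬝ᵥ (A *ᵥ e))) * t ^ 2 := by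
    funext t
    rw [hcoord t, hexp t]
    ring
  rw [hline, iteratedDeriv_two_quadratic]
  have hee : e ⬝ᵥ (A *ᵥ e) = A i i := by
    simp [e, single_dotProduct, Matrix.mulVec_single]
  rw [hee]; ring

/-- The Hyvärinen score of a Gaussian density. -/
lemma hyvScore_gauss {S : Matrix (Fin d) (Fin d) ℝ} (hS : S.PosDef)
    (θ x : EuclideanSpace ℝ (Fin d)) :
    hyvScore x (gaussDensity θ S)
      = (1/2) * ((fun i => x i - θ i) ⬝ᵥ ((S⁻¹ * S⁻¹) *ᵥ fun i => x i - θ i))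
        - ∑ i, S⁻¹ i i := by
  have hA : S⁻¹ᵀ = S⁻¹ := inv_symm hS
  unfold hyvScore
  rw [log_gauss_fun hS θ]
  rw [(hasGradientAt_quad hA (Real.log (gconst d S)) θ x).gradient]
  rw [lapl_quad hA (Real.log (gconst d S)) θ x]
  rw [norm_sq_neg_matCLM hA (x - θ)]
  have h : (fun i => (x - θ) i) = fun i => x i - θ i := rfl
  rw [h]
  ring

end Aux

/-! ### Integral of the Gaussian density -/

section SqrtAux

open scoped MatrixOrder

lemma exists_psd_sqrt {d : ℕ} {S : Matrix (Fin d) (Fin d) ℝ} (hS : S.PosDef) :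
    ∃ B : Matrix (Fin d) (Fin d) ℝ, B.PosSemidef ∧ B * B = S :=
  ⟨CFC.sqrt S, (CFC.sqrt_nonneg S).posSemidef, CFC.sqrt_mul_sqrt_self S hS.posSemidef.nonneg⟩

end SqrtAux

section Integral

variable {d : ℕ}

lemma cont_quad (A : Matrix (Fin d) (Fin d) ℝ) :
    Continuous fun v : Fin d → ℝ => Real.exp (-(1/2) * (v ⬝ᵥ A *ᵥ v)) := by
  apply Real.continuous_exp.comp
  apply Continuous.mul continuous_const
  simp only [dotProduct, Matrix.mulVec]
  fun_prop

lemma integral_std_gauss :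
    ∫ w : Fin d → ℝ, Real.exp (-(1/2) * (w ⬝ᵥ w)) = Real.sqrt (2 * π) ^ d := by
  have h1 : ∀ w : Fin d → ℝ, Real.exp (-(1/2) * (w ⬝ᵥ w))
      = ∏ i, Real.exp (-(1/2) * (w i ^ 2)) := by
    intro w
    rw [← Real.exp_sum, dotProduct, Finset.mul_sum]
    congr 1
    exact Finset.sum_congr rfl fun i _ => by ring
  simp_rw [h1]
  rw [MeasureTheory.integral_fintype_prod_volume_eq_pow (ι := Fin d) (fun t : ℝ => Real.exp (-(1/2) * t ^ 2))]
  have h2 : ∫ t : ℝ, Real.exp (-(1/2) * t ^ 2) = Real.sqrt (2 * π) := by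
    rw [integral_gaussian (1/2)]
    congr 1
    ring
  rw [h2, Fintype.card_fin]

lemma integral_gaussDensity {S : Matrix (Fin d) (Fin d) ℝ} (hS : S.PosDef)
    (θ : EuclideanSpace ℝ (Fin d)) : ∫ x, gaussDensity θ S x = 1 := by
  classical
  obtain ⟨B, hBps, hBB'⟩ := exists_psd_sqrt hS
  have hBsym : Bᵀ = B := by
    have := hBps.1
    rwa [Matrix.IsHermitian, Matrix.conjTranspose_eq_transpose_of_trivial] at this
  have hBB : B * B = S := hBB'
  have hdetS : 0 < S.det := hS.det_pos
  have hdetBB : B.det * B.det = S.det := by rw [← Matrix.det_mul, hBB]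
  have hdetB_nonneg : 0 ≤ B.det := by
    rw [hBps.1.det_eq_prod_eigenvalues]
    exact Finset.prod_nonneg fun i _ => hBps.eigenvalues_nonneg i
  have hdetB : 0 < B.det := by
    rcases lt_or_eq_of_le hdetB_nonneg with h | h
    · exact h
    · exfalso; rw [← h] at hdetBB; simp at hdetBB; linarith [hdetBB ▸ hdetS]
  have hdetB' : B.det ≠ 0 := ne_of_gt hdetB
  have hBinv_sym : (B⁻¹)ᵀ = B⁻¹ := by rw [Matrix.transpose_nonsing_inv, hBsym]
  -- Step A : translation
  have hA : ∫ x, gaussDensity θ S x = ∫ x : EuclideanSpace ℝ (Fin d), gaussDensity 0 S x := by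
    have h : ∀ x : EuclideanSpace ℝ (Fin d), gaussDensity θ S x = gaussDensity 0 S (x - θ) := by
      intro x
      unfold gaussDensity
      have h0 : (fun i => (x - θ) i - (0 : EuclideanSpace ℝ (Fin d)) i)
          = fun i => x i - θ i := by
        funext i
        show (x i - θ i) - 0 = x i - θ i
        ring
      rw [h0]
    simp_rw [h]
    exact integral_sub_right_eq_self (gaussDensity 0 S) θ
  -- Step B : to Pi space
  have hB' : ∫ x : EuclideanSpace ℝ (Fin d), gaussDensity 0 S x
      = ∫ v : Fin d → ℝ, gconst d S * Real.exp (-(1/2) * (v ⬝ᵥ S⁻¹ *ᵥ v)) := by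
    have hmp := (EuclideanSpace.volume_preserving_symm_measurableEquiv_toLp (Fin d)).symm
    rw [← hmp.integral_comp (MeasurableEquiv.measurableEmbedding _)]
    refine congrArg _ (funext fun v => ?_)
    unfold gaussDensity gconst
    congr 2
    have hv : (fun i => (MeasurableEquiv.toLp 2 (Fin d → ℝ)).symm.symm v i
        - (0 : EuclideanSpace ℝ (Fin d)) i) = v := funext fun i => sub_zero (v i)
    rw [hv]
  -- Step D : change of variables
  have hS_inv_eq : S⁻¹ = B⁻¹ * B⁻¹ := by rw [← hBB, Matrix.mul_inv_rev]
  have hcomp : ∀ w : Fin d → ℝ, ((B *ᵥ w) ⬝ᵥ S⁻¹ *ᵥ (B *ᵥ w)) = w ⬝ᵥ w := by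
    intro w
    rw [hS_inv_eq, Matrix.mulVec_mulVec, Matrix.mul_assoc,
      Matrix.nonsing_inv_mul B (isUnit_iff_ne_zero.mpr hdetB'),
      Matrix.mul_one, dot_symm_aux hBinv_sym, Matrix.mulVec_mulVec,
      Matrix.nonsing_inv_mul B (isUnit_iff_ne_zero.mpr hdetB'), Matrix.one_mulVec]
  have hchg : ∫ v : Fin d → ℝ, Real.exp (-(1/2) * (v ⬝ᵥ S⁻¹ *ᵥ v))
      = B.det * ∫ w : Fin d → ℝ, Real.exp (-(1/2) * (w ⬝ᵥ w)) := by
    set L : (Fin d → ℝ) →ₗ[ℝ] (Fin d → ℝ) := Matrix.toLin' B with hL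
    have hdetL : LinearMap.det L = B.det := by rw [hL, LinearMap.det_toLin']
    have hdetL' : LinearMap.det L ≠ 0 := by rw [hdetL]; exact hdetB'
    have hmap := MeasureTheory.Measure.map_linearMap_addHaar_pi_eq_smul_addHaar hdetL' volume
    have hmeas : AEMeasurable L volume := L.continuous_of_finiteDimensional.measurable.aemeasurable
    have hf := cont_quad (d := d) S⁻¹
    have h1 : ∫ w : Fin d → ℝ, Real.exp (-(1/2) * ((L w) ⬝ᵥ S⁻¹ *ᵥ (L w)))
        = ∫ v, Real.exp (-(1/2) * (v ⬝ᵥ S⁻¹ *ᵥ v)) ∂(Measure.map L volume) :=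
      (MeasureTheory.integral_map hmeas hf.aestronglyMeasurable).symm
    rw [hmap, MeasureTheory.integral_smul_measure] at h1
    have htoReal : (ENNReal.ofReal |(LinearMap.det L)⁻¹|).toReal = (B.det)⁻¹ := by
      rw [ENNReal.toReal_ofReal (abs_nonneg _), hdetL, abs_inv, abs_of_pos hdetB]
    rw [htoReal] at h1
    have h2 : ∀ w : Fin d → ℝ, Real.exp (-(1/2) * ((L w) ⬝ᵥ S⁻¹ *ᵥ (L w)))
        = Real.exp (-(1/2) * (w ⬝ᵥ w)) := by
      intro w
      rw [hL]
      simp only [Matrix.toLin'_apply]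
      rw [hcomp]
    simp_rw [h2] at h1
    rw [h1, smul_eq_mul, ← mul_assoc, mul_inv_cancel₀ hdetB', one_mul]
  -- assemble
  rw [hA, hB', integral_const_mul, hchg, integral_std_gauss]
  -- constants
  unfold gconst
  have h2pi : (0:ℝ) < 2 * π := by positivity
  have hsq : Real.sqrt (2 * π) ^ d = (2 * π) ^ ((d : ℝ) / 2) := by
    rw [Real.sqrt_eq_rpow, ← Real.rpow_natCast ((2*π) ^ ((1:ℝ)/2)) d, ← Real.rpow_mul h2pi.le]
    ring_nf
  have hdetpow : S.det ^ (-(1:ℝ)/2) * B.det = 1 := by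
    rw [← hdetBB, ← sq]
    rw [← Real.rpow_natCast (B.det) 2, ← Real.rpow_mul hdetB_nonneg]
    have h21 : ((2:ℕ):ℝ) * (-(1:ℝ)/2) = -1 := by norm_num
    rw [h21, Real.rpow_neg_one, inv_mul_cancel₀ hdetB']
  have hfinal : (2*π)^(-(d:ℝ)/2) * S.det^(-(1:ℝ)/2) * (B.det * (2*π)^((d:ℝ)/2))
      = ((2*π)^(-(d:ℝ)/2) * (2*π)^((d:ℝ)/2)) * (S.det^(-(1:ℝ)/2) * B.det) := by ring
  rw [hsq, hfinal, ← Real.rpow_add h2pi, hdetpow, neg_div, neg_add_cancel, Real.rpow_zero,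
    one_mul]

end Integral

/-! ### The MGF computation -/

section MGF

variable {d : ℕ}

lemma bilin_expand {A : Matrix (Fin d) (Fin d) ℝ} (hA : Aᵀ = A) (a b : Fin d → ℝ) :
    (a + b) ⬝ᵥ (A *ᵥ (a + b))
      = a ⬝ᵥ (A *ᵥ a) + 2 * (a ⬝ᵥ (A *ᵥ b)) + b ⬝ᵥ (A *ᵥ b) := by
  simp only [Matrix.mulVec_add, dotProduct_add, add_dotProduct]
  rw [dot_symm_aux hA b a]
  ring

lemma mgf_gauss {S : Matrix (Fin d) (Fin d) ℝ} (hS : S.PosDef)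
    (θ₀ θ₁ : EuclideanSpace ℝ (Fin d)) (lam : ℝ) :
    ∫ x, Real.exp (lam * (hyvScore x (gaussDensity θ₀ S) - hyvScore x (gaussDensity θ₁ S)))
        * gaussDensity θ₀ S x
      = Real.exp ((1 / 2) * lam ^ 2
            * ((fun i => θ₀ i - θ₁ i) ⬝ᵥ (S⁻¹ ^ 3 *ᵥ fun i => θ₀ i - θ₁ i))
          - (1 / 2) * lam
            * ((fun i => θ₀ i - θ₁ i) ⬝ᵥ (S⁻¹ ^ 2 *ᵥ fun i => θ₀ i - θ₁ i))) := by
  classical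
  have hA : S⁻¹ᵀ = S⁻¹ := inv_symm hS
  have hAA : (S⁻¹ * S⁻¹)ᵀ = S⁻¹ * S⁻¹ := by
    rw [Matrix.transpose_mul, hA]
  set Δ : Fin d → ℝ := fun i => θ₀ i - θ₁ i with hΔdef
  set K : ℝ := (1 / 2) * lam ^ 2 * (Δ ⬝ᵥ (S⁻¹ ^ 3 *ᵥ Δ))
      - (1 / 2) * lam * (Δ ⬝ᵥ (S⁻¹ ^ 2 *ᵥ Δ)) with hK
  set θ' : EuclideanSpace ℝ (Fin d) :=
    θ₀ - lam • ((WithLp.equiv 2 (Fin d → ℝ)).symm (S⁻¹ *ᵥ Δ)) with hθ'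
  have hθ'i : ∀ i, θ' i = θ₀ i - lam * (S⁻¹ *ᵥ Δ) i := fun i => rfl
  have hpow2 : S⁻¹ ^ 2 = S⁻¹ * S⁻¹ := sq S⁻¹
  have hpow3 : S⁻¹ ^ 3 = S⁻¹ * S⁻¹ * S⁻¹ := by
    rw [pow_succ, hpow2]
  -- pointwise identity
  have hpt : ∀ x : EuclideanSpace ℝ (Fin d),
      Real.exp (lam * (hyvScore x (gaussDensity θ₀ S) - hyvScore x (gaussDensity θ₁ S)))
        * gaussDensity θ₀ S x
      = Real.exp K * gaussDensity θ' S x := by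
    intro x
    rw [hyvScore_gauss hS θ₀ x, hyvScore_gauss hS θ₁ x, gaussDensity_eq, gaussDensity_eq,
      mul_left_comm, mul_left_comm (Real.exp K), ← Real.exp_add, ← Real.exp_add]
    congr 2
    set u : Fin d → ℝ := fun i => x i - θ₀ i with hu
    have hu1 : (fun i => x i - θ₁ i) = u + Δ := by
      funext i
      show x i - θ₁ i = (x i - θ₀ i) + (θ₀ i - θ₁ i)
      ring
    have hw : (fun i => x i - θ' i) = u + lam • (S⁻¹ *ᵥ Δ) := by
      funext i
      rw [hθ'i i]
      show x i - (θ₀ i - lam * (S⁻¹ *ᵥ Δ) i) = (x i - θ₀ i) + lam * (S⁻¹ *ᵥ Δ) i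
      ring
    rw [hu1, hw, bilin_expand hAA u Δ, bilin_expand hA u (lam • (S⁻¹ *ᵥ Δ))]
    have e1 : u ⬝ᵥ (S⁻¹ *ᵥ (lam • (S⁻¹ *ᵥ Δ))) = lam * (u ⬝ᵥ ((S⁻¹ * S⁻¹) *ᵥ Δ)) := by
      rw [Matrix.mulVec_smul, dotProduct_smul, smul_eq_mul, Matrix.mulVec_mulVec]
    have e2 : (lam • (S⁻¹ *ᵥ Δ)) ⬝ᵥ (S⁻¹ *ᵥ (lam • (S⁻¹ *ᵥ Δ)))
        = lam ^ 2 * (Δ ⬝ᵥ ((S⁻¹ * S⁻¹ * S⁻¹) *ᵥ Δ)) := by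
      rw [Matrix.mulVec_smul, dotProduct_smul, smul_dotProduct, smul_eq_mul,
        smul_eq_mul, Matrix.mulVec_mulVec, dot_symm_aux hAA (S⁻¹ *ᵥ Δ) Δ,
        Matrix.mulVec_mulVec]
      ring_nf
    rw [e1, e2, hK, hpow2, hpow3]
    ring
  simp_rw [hpt]
  rw [integral_const_mul, integral_gaussDensity hS θ', mul_one, hK]

end MGF

/-! ### Main theorem -/

/-- for Gaussian pre- and post-change densities `p_0 = N(θ_0, Σ)` and
`p_1 = N(θ_1, Σ)` and `z_λ(x) = λ(S_H(x, p_0) − S_H(x, p_1))`, the pre-change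
expectation of `exp(z_λ)` equals `exp((1/2)λ²ΔᵀΣ⁻³Δ − (1/2)λΔᵀΣ⁻²Δ)` where
`Δ = θ_0 − θ_1`; and if `Δ ≠ 0` then `λ* = (ΔᵀΣ⁻²Δ)/(ΔᵀΣ⁻³Δ)` is the unique
positive `λ` for which this expectation equals `1`. -/
theorem gaussian_scusum_mgf {d : ℕ} (θ₀ θ₁ : EuclideanSpace ℝ (Fin d))
    (S : Matrix (Fin d) (Fin d) ℝ) (hS : S.PosDef) :
    (∀ lam : ℝ,
      ∫ x, Real.exp (lam * (hyvScore x (gaussDensity θ₀ S) - hyvScore x (gaussDensity θ₁ S)))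
          * gaussDensity θ₀ S x
        = Real.exp ((1 / 2) * lam ^ 2
              * ((fun i => θ₀ i - θ₁ i) ⬝ᵥ (S⁻¹ ^ 3 *ᵥ fun i => θ₀ i - θ₁ i))
            - (1 / 2) * lam
              * ((fun i => θ₀ i - θ₁ i) ⬝ᵥ (S⁻¹ ^ 2 *ᵥ fun i => θ₀ i - θ₁ i)))) ∧
    ((fun i => θ₀ i - θ₁ i) ≠ (0 : Fin d → ℝ) →
      (0 < ((fun i => θ₀ i - θ₁ i) ⬝ᵥ (S⁻¹ ^ 2 *ᵥ fun i => θ₀ i - θ₁ i))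
            / ((fun i => θ₀ i - θ₁ i) ⬝ᵥ (S⁻¹ ^ 3 *ᵥ fun i => θ₀ i - θ₁ i))) ∧
      (∫ x, Real.exp ((((fun i => θ₀ i - θ₁ i) ⬝ᵥ (S⁻¹ ^ 2 *ᵥ fun i => θ₀ i - θ₁ i))
              / ((fun i => θ₀ i - θ₁ i) ⬝ᵥ (S⁻¹ ^ 3 *ᵥ fun i => θ₀ i - θ₁ i)))
            * (hyvScore x (gaussDensity θ₀ S) - hyvScore x (gaussDensity θ₁ S)))
          * gaussDensity θ₀ S x = 1) ∧
      (∀ lam : ℝ, 0 < lam →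
        (∫ x, Real.exp (lam * (hyvScore x (gaussDensity θ₀ S)
            - hyvScore x (gaussDensity θ₁ S))) * gaussDensity θ₀ S x) = 1 →
        lam = ((fun i => θ₀ i - θ₁ i) ⬝ᵥ (S⁻¹ ^ 2 *ᵥ fun i => θ₀ i - θ₁ i))
            / ((fun i => θ₀ i - θ₁ i) ⬝ᵥ (S⁻¹ ^ 3 *ᵥ fun i => θ₀ i - θ₁ i)))) := by
  have hmgf := mgf_gauss hS θ₀ θ₁
  refine ⟨hmgf, fun hΔ => ?_⟩
  set Δ : Fin d → ℝ := fun i => θ₀ i - θ₁ i with hΔdef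
  have hA : S⁻¹ᵀ = S⁻¹ := inv_symm hS
  have hAinv : S⁻¹.PosDef := hS.inv
  have hdet : S⁻¹.det ≠ 0 := ne_of_gt hAinv.det_pos
  have hAΔ : S⁻¹ *ᵥ Δ ≠ 0 := by
    intro h
    apply hΔ
    have := congrArg (fun v => S *ᵥ v) h
    simpa [Matrix.mulVec_mulVec, Matrix.mul_nonsing_inv S
      (isUnit_iff_ne_zero.mpr (ne_of_gt hS.det_pos)), Matrix.one_mulVec] using this
  have hpow2 : S⁻¹ ^ 2 = S⁻¹ * S⁻¹ := sq S⁻¹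
  have hpow3 : S⁻¹ ^ 3 = S⁻¹ * S⁻¹ * S⁻¹ := by rw [pow_succ, hpow2]
  set r : ℝ := Δ ⬝ᵥ (S⁻¹ ^ 2 *ᵥ Δ) with hr
  set s : ℝ := Δ ⬝ᵥ (S⁻¹ ^ 3 *ᵥ Δ) with hs
  have hr_eq : r = (S⁻¹ *ᵥ Δ) ⬝ᵥ (S⁻¹ *ᵥ Δ) := by
    rw [hr, hpow2, ← Matrix.mulVec_mulVec, dot_symm_aux hA Δ (S⁻¹ *ᵥ Δ)]
  have hs_eq : s = (S⁻¹ *ᵥ Δ) ⬝ᵥ (S⁻¹ *ᵥ (S⁻¹ *ᵥ Δ)) := by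
    rw [hs, hpow3, ← Matrix.mulVec_mulVec, ← Matrix.mulVec_mulVec,
      dot_symm_aux hA Δ (S⁻¹ *ᵥ (S⁻¹ *ᵥ Δ))]
    exact dotProduct_comm _ _
  have hr_pos : 0 < r := by
    rw [hr_eq]
    have hne : (S⁻¹ *ᵥ Δ) ⬝ᵥ (S⁻¹ *ᵥ Δ) ≠ 0 := by
      rw [Ne, dotProduct_self_eq_zero]
      exact hAΔ
    have hnn : 0 ≤ (S⁻¹ *ᵥ Δ) ⬝ᵥ (S⁻¹ *ᵥ Δ) :=
      Finset.sum_nonneg fun i _ => mul_self_nonneg _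
    exact lt_of_le_of_ne hnn (Ne.symm hne)
  have hs_pos : 0 < s := by
    rw [hs_eq]
    have := hAinv.dotProduct_mulVec_pos hAΔ
    simpa using this
  refine ⟨div_pos hr_pos hs_pos, ?_, ?_⟩
  · rw [hmgf (r / s)]
    have : (1 / 2) * (r / s) ^ 2 * s - (1 / 2) * (r / s) * r = 0 := by
      field_simp
      ring
    rw [this, Real.exp_zero]
  · intro lam hlam hint
    rw [hmgf lam] at hint
    rw [Real.exp_eq_one_iff] at hint
    have h4 : lam * (lam * s - r) * (1/2) = 0 := by
      calc lam * (lam * s - r) * (1/2) = (1/2) * lam ^ 2 * s - (1/2) * lam * r := by ring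
        _ = 0 := hint
    have h4' : lam * (lam * s - r) = 0 := by
      rcases mul_eq_zero.mp h4 with h | h
      · exact h
      · norm_num at h
    rcases mul_eq_zero.mp h4' with h | h
    · exact absurd h (ne_of_gt hlam)
    · rw [eq_div_iff (ne_of_gt hs_pos)]
      linarith
end
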